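/- Let K have characteristic zero, let N = J_{n,0} ∈ Mₙ(K) be the nilpotent Jordan block, and let A₁, B₁ ∈ Mₙ(K). If the matrices N + A₁ζ and N + B₁ζ are similar over 𝒟, then tr(A₁ N^{k−1}) = tr(B₁ N^{k−1}) for every integer k ≥ 1. -/
import Mathlib

open Matrix

/-- The 𝒟-matrix `A₀ + A₁ζ` built from two matrices over `K`. -/
def dualMat {K : Type*} [Field K] {ι : Type*} (A₀ A₁ : Matrix ι ι K) :
    Matrix ι ι (DualNumber K) :=
  A₀.map (TrivSqZeroExt.inl : K → DualNumber K) +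
    A₁.map (TrivSqZeroExt.inr : K → DualNumber K)

/-- Similarity of matrices over the dual numbers. -/
def DSimilar {K : Type*} [Field K] {ι : Type*} [Fintype ι] [DecidableEq ι]
    (A B : Matrix ι ι (DualNumber K)) : Prop :=
  ∃ G : Matrix ι ι (DualNumber K), IsUnit G ∧ B = G * A * G⁻¹

section aux
variable {K : Type*} [Field K] {ι : Type*} [Fintype ι] [DecidableEq ι]

lemma fst_dualMat (X Y : Matrix ι ι K) (i j : ι) : ((dualMat X Y) i j).fst = X i j := by
  simp [dualMat, Matrix.add_apply, Matrix.map_apply]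

lemma snd_dualMat (X Y : Matrix ι ι K) (i j : ι) : ((dualMat X Y) i j).snd = Y i j := by
  simp [dualMat, Matrix.add_apply, Matrix.map_apply]

lemma dualMat_mul (X Y Z W : Matrix ι ι K) :
    dualMat X Y * dualMat Z W = dualMat (X * Z) (X * W + Y * Z) := by
  ext i j
  · simp [Matrix.mul_apply, TrivSqZeroExt.fst_sum, TrivSqZeroExt.fst_mul,
      fst_dualMat, snd_dualMat]
  · simp [Matrix.mul_apply, Matrix.add_apply, TrivSqZeroExt.snd_sum,
      TrivSqZeroExt.snd_mul, fst_dualMat, snd_dualMat, Finset.sum_add_distrib, mul_comm]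

lemma dualMat_one : dualMat (1 : Matrix ι ι K) 0 = 1 := by
  ext i j
  · simp [fst_dualMat, Matrix.one_apply, apply_ite]
  · simp [snd_dualMat, Matrix.one_apply, apply_ite]

lemma dualMat_pow (X Y : Matrix ι ι K) (k : ℕ) :
    (dualMat X Y) ^ k =
      dualMat (X ^ k) (∑ i ∈ Finset.range k, X ^ i * Y * X ^ (k - 1 - i)) := by
  induction k with
  | zero => simpa using dualMat_one.symm
  | succ k ih =>
    have hterm : ∀ i ∈ Finset.range k,
        X ^ i * Y * X ^ (k + 1 - 1 - i) = X ^ i * Y * X ^ (k - 1 - i) * X := by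
      intro i hi
      have hik : i < k := Finset.mem_range.mp hi
      have he : k + 1 - 1 - i = (k - 1 - i) + 1 := by omega
      rw [he, pow_succ, ← mul_assoc]
    have hsum : ∑ i ∈ Finset.range (k + 1), X ^ i * Y * X ^ (k + 1 - 1 - i) =
        X ^ k * Y + (∑ i ∈ Finset.range k, X ^ i * Y * X ^ (k - 1 - i)) * X := by
      rw [Finset.sum_range_succ, Finset.sum_congr rfl hterm, ← Finset.sum_mul]
      have h0 : k + 1 - 1 - k = 0 := by omega
      rw [h0, pow_zero, mul_one, add_comm]
    rw [pow_succ, ih, dualMat_mul, ← pow_succ, hsum]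

lemma conj_pow_aux {R : Type*} [Ring R] (G A Gi : R) (h1 : Gi * G = 1)
    (h2 : G * Gi = 1) (k : ℕ) : (G * A * Gi) ^ k = G * A ^ k * Gi := by
  induction k with
  | zero => simp [h2]
  | succ k ih =>
    rw [pow_succ, ih, pow_succ]
    calc G * A ^ k * Gi * (G * A * Gi)
        = G * A ^ k * (Gi * G) * (A * Gi) := by simp only [mul_assoc]
      _ = G * (A ^ k * A) * Gi := by rw [h1]; simp only [mul_one, mul_assoc]

lemma snd_trace (A : Matrix ι ι (DualNumber K)) :
    (Matrix.trace A).snd = Matrix.trace (A.map TrivSqZeroExt.snd) := by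
  simp [Matrix.trace, Matrix.diag, TrivSqZeroExt.snd_sum, Matrix.map_apply]

end aux

/-- Lemma 4.2: if `J_{n,0} + A₁ζ` and `J_{n,0} + B₁ζ` are similar over 𝒟, then
`tr(A₁ N^{k−1}) = tr(B₁ N^{k−1})` for all `k ≥ 1`. -/
theorem stmt_16 {K : Type*} [Field K] [CharZero K] {n : ℕ}
    (N : Matrix (Fin n) (Fin n) K)
    (hN : ∀ i j : Fin n, N i j = if (j : ℕ) = (i : ℕ) + 1 then 1 else 0)
    (A₁ B₁ : Matrix (Fin n) (Fin n) K)
    (h : DSimilar (dualMat N A₁) (dualMat N B₁)) :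
    ∀ k : ℕ, 1 ≤ k →
      Matrix.trace (A₁ * N ^ (k - 1)) = Matrix.trace (B₁ * N ^ (k - 1)) := by
  intro k hk
  obtain ⟨G, hG, hB⟩ := h
  -- traces of k-th powers agree
  have hGinv : G⁻¹ * G = 1 :=
    Matrix.nonsing_inv_mul G ((Matrix.isUnit_iff_isUnit_det G).mp hG)
  have hGinv' : G * G⁻¹ = 1 :=
    Matrix.mul_nonsing_inv G ((Matrix.isUnit_iff_isUnit_det G).mp hG)
  have hconj : (dualMat N B₁) ^ k = G * (dualMat N A₁) ^ k * G⁻¹ := by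
    rw [hB]; exact conj_pow_aux G _ G⁻¹ hGinv hGinv' k
  have htr : Matrix.trace ((dualMat N A₁) ^ k) = Matrix.trace ((dualMat N B₁) ^ k) := by
    rw [hconj, Matrix.trace_mul_comm, ← Matrix.mul_assoc, hGinv, Matrix.one_mul]
  -- snd parts
  have key : ∀ C : Matrix (Fin n) (Fin n) K,
      (Matrix.trace ((dualMat N C) ^ k)).snd = (k : K) * Matrix.trace (C * N ^ (k - 1)) := by
    intro C
    rw [dualMat_pow, snd_trace]
    have hmap : (dualMat (N ^ k) (∑ i ∈ Finset.range k, N ^ i * C * N ^ (k - 1 - i))).map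
        TrivSqZeroExt.snd = ∑ i ∈ Finset.range k, N ^ i * C * N ^ (k - 1 - i) := by
      ext i j; simp [Matrix.map_apply, snd_dualMat]
    rw [hmap, Matrix.trace_sum]
    have : ∀ i ∈ Finset.range k,
        Matrix.trace (N ^ i * C * N ^ (k - 1 - i)) = Matrix.trace (C * N ^ (k - 1)) := by
      intro i hi
      have hik : i < k := Finset.mem_range.mp hi
      rw [Matrix.mul_assoc, Matrix.trace_mul_comm, Matrix.mul_assoc, ← pow_add]
      congr 3
      omega
    rw [Finset.sum_congr rfl this, Finset.sum_const, Finset.card_range, nsmul_eq_mul]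
  have := htr
  apply_fun TrivSqZeroExt.snd at this
  rw [key A₁, key B₁] at this
  have hk0 : (k : K) ≠ 0 := Nat.cast_ne_zero.mpr (by omega)
  exact mul_left_cancel₀ hk0 this
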